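/- The map φ sending the Riordan pair (g,f) to the Double Riordan triple (g(z²), z, f(z²)/z) is a group homomorphism: φ(g,f) * φ(G,F) = φ((g,f)*(G,F)), i.e., (g(z²), z, f(z²)/z) * (G(z²), z, F(z²)/z) = ((g·(G∘f))(z²), z, (F∘f)(z²)/z). -/

import Mathlib

open PowerSeries

variable {K : Type*} [Field K]

/-- Composition (substitution) of formal power series: `pcomp A f = A ∘ f`,
intended for `f` with zero constant term, where `coeff n (f ^ k) = 0` for `k > n`. -/
noncomputable def pcomp (A f : PowerSeries K) : PowerSeries K :=
  PowerSeries.mk fun n => ∑ k ∈ Finset.range (n + 1), coeff k A * coeff n (f ^ k)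

/-- A formal power series is even if all its odd coefficients vanish. -/
def IsEvenPS (g : PowerSeries K) : Prop := ∀ n : ℕ, Odd n → coeff n g = 0

/-- A formal power series is odd if all its even coefficients vanish. -/
def IsOddPS (f : PowerSeries K) : Prop := ∀ n : ℕ, Even n → coeff n f = 0

lemma coeff_pow_eq_zero' {f : PowerSeries K} (hf : constantCoeff f = 0)
    {n k : ℕ} (h : n < k) : coeff n (f ^ k) = 0 := by
  obtain ⟨q, rfl⟩ := X_dvd_iff.mpr hf
  rw [mul_pow, coeff_X_pow_mul', if_neg (by omega)]

lemma coeff_pcomp {A f : PowerSeries K} (n : ℕ) :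
    coeff n (pcomp A f) = ∑ k ∈ Finset.range (n + 1), coeff k A * coeff n (f ^ k) := by
  simp [pcomp]

/-- The `n`-th coefficient of the composite equals the `n`-th coefficient of the
evaluation of any sufficiently long truncation. -/
lemma coeff_pcomp_eq_eval₂ {A f : PowerSeries K} (hf : constantCoeff f = 0)
    {n N : ℕ} (hN : n < N) :
    coeff n (pcomp A f) = coeff n ((trunc N A).eval₂ (C (R := K)) f) := by
  rw [eval₂_trunc_eq_sum_range, map_sum, coeff_pcomp]
  rw [show ∑ i ∈ Finset.range N, coeff n (C (coeff i A) * f ^ i)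
      = ∑ i ∈ Finset.range N, coeff i A * coeff n (f ^ i) from
    Finset.sum_congr rfl fun i _ => by rw [coeff_C_mul]]
  apply Finset.sum_subset (Finset.range_subset_range.mpr (by omega))
  intro k _ hk
  rw [Finset.mem_range, not_lt] at hk
  rw [coeff_pow_eq_zero' hf (by omega), mul_zero]

/-- Coefficients of the evaluation of any polynomial at `f` with zero constant term. -/
lemma coeff_eval₂_poly {f : PowerSeries K} (hf : constantCoeff f = 0)
    (p : Polynomial K) (n : ℕ) :
    coeff n (p.eval₂ (C (R := K)) f)
      = ∑ k ∈ Finset.range (n + 1), p.coeff k * coeff n (f ^ k) := by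
  obtain ⟨N, hN1, hN2⟩ : ∃ N, p.natDegree < N ∧ n < N :=
    ⟨p.natDegree + n + 1, by omega, by omega⟩
  rw [Polynomial.eval₂_eq_sum_range' _ hN1, map_sum]
  rw [show ∑ i ∈ Finset.range N, coeff n (C (p.coeff i) * f ^ i)
      = ∑ i ∈ Finset.range N, p.coeff i * coeff n (f ^ i) from
    Finset.sum_congr rfl fun i _ => by rw [coeff_C_mul]]
  symm
  apply Finset.sum_subset (Finset.range_subset_range.mpr (by omega))
  intro k _ hk
  rw [Finset.mem_range, not_lt] at hk
  rw [coeff_pow_eq_zero' hf (by omega), mul_zero]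

lemma pcomp_mul {A B f : PowerSeries K} (hf : constantCoeff f = 0) :
    pcomp (A * B) f = pcomp A f * pcomp B f := by
  ext n
  set N := n + 1 with hNdef
  have hn : n < N := by omega
  rw [coeff_pcomp_eq_eval₂ (N := N) hf hn]
  rw [coeff_mul]
  have hco : ∀ p : ℕ × ℕ, p ∈ Finset.HasAntidiagonal.antidiagonal n →
      coeff p.1 (pcomp A f) * coeff p.2 (pcomp B f)
        = coeff p.1 ((trunc N A).eval₂ (C (R := K)) f) * coeff p.2 ((trunc N B).eval₂ (C (R := K)) f) := by
    intro p hp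
    have hpn := Finset.HasAntidiagonal.mem_antidiagonal.mp hp
    rw [coeff_pcomp_eq_eval₂ (N := N) hf (by omega),
      coeff_pcomp_eq_eval₂ (N := N) hf (by omega)]
  rw [Finset.sum_congr rfl hco, ← coeff_mul, ← Polynomial.eval₂_mul]
  rw [coeff_eval₂_poly hf, coeff_eval₂_poly hf]
  apply Finset.sum_congr rfl
  intro k hk
  rw [Finset.mem_range] at hk
  congr 1
  rw [Polynomial.coeff_mul, coeff_trunc, if_pos (by omega), coeff_mul]
  apply Finset.sum_congr rfl
  intro p hp
  have hpk := Finset.HasAntidiagonal.mem_antidiagonal.mp hp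
  rw [coeff_trunc, coeff_trunc, if_pos (by omega), if_pos (by omega)]

lemma pcomp_one {f : PowerSeries K} : pcomp (1 : PowerSeries K) f = 1 := by
  ext n
  rw [coeff_pcomp,
    Finset.sum_eq_single 0 (fun k _ hk0 => by rw [coeff_one, if_neg hk0, zero_mul])
      (fun hn => by simp at hn)]
  simp

lemma pcomp_pow {A f : PowerSeries K} (hf : constantCoeff f = 0) (m : ℕ) :
    pcomp (A ^ m) f = (pcomp A f) ^ m := by
  induction m with
  | zero => simpa using pcomp_one
  | succ m ih => rw [pow_succ, pow_succ, pcomp_mul hf, ih]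

lemma pcomp_assoc {A f w : PowerSeries K} (hf : constantCoeff f = 0)
    (hw : constantCoeff w = 0) :
    pcomp (pcomp A f) w = pcomp A (pcomp f w) := by
  ext n
  rw [coeff_pcomp, coeff_pcomp]
  rw [show ∑ m ∈ Finset.range (n + 1), coeff m A * coeff n (pcomp f w ^ m)
      = ∑ m ∈ Finset.range (n + 1), coeff m A *
          ∑ k ∈ Finset.range (n + 1), coeff k (f ^ m) * coeff n (w ^ k) from
    Finset.sum_congr rfl fun m _ => by rw [← pcomp_pow hw, coeff_pcomp]]
  rw [show ∑ k ∈ Finset.range (n + 1), coeff k (pcomp A f) * coeff n (w ^ k)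
      = ∑ k ∈ Finset.range (n + 1),
          (∑ m ∈ Finset.range (n + 1), coeff m A * coeff k (f ^ m)) * coeff n (w ^ k) from ?_]
  · calc ∑ k ∈ Finset.range (n + 1),
          (∑ m ∈ Finset.range (n + 1), coeff m A * coeff k (f ^ m)) * coeff n (w ^ k)
        = ∑ k ∈ Finset.range (n + 1), ∑ m ∈ Finset.range (n + 1),
            coeff m A * coeff k (f ^ m) * coeff n (w ^ k) := by
          simp_rw [Finset.sum_mul]
      _ = ∑ m ∈ Finset.range (n + 1), ∑ k ∈ Finset.range (n + 1),
            coeff m A * coeff k (f ^ m) * coeff n (w ^ k) := Finset.sum_comm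
      _ = ∑ m ∈ Finset.range (n + 1), coeff m A *
            ∑ k ∈ Finset.range (n + 1), coeff k (f ^ m) * coeff n (w ^ k) := by
          simp_rw [Finset.mul_sum, mul_assoc]
  · apply Finset.sum_congr rfl
    intro k hk
    rw [Finset.mem_range] at hk
    congr 1
    rw [coeff_pcomp]
    apply Finset.sum_subset (Finset.range_subset_range.mpr (by omega))
    intro m _ hm
    rw [Finset.mem_range, not_lt] at hm
    rw [coeff_pow_eq_zero' hf (by omega), mul_zero]

lemma pcomp_X {h : PowerSeries K} (hh : constantCoeff h = 0) :
    pcomp X h = h := by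
  ext n
  rw [coeff_pcomp,
    Finset.sum_eq_single 1 (fun k _ hk1 => by rw [coeff_X, if_neg hk1, zero_mul])
      (fun h1 => by
        rw [Finset.mem_range, not_lt] at h1
        have hn0 : n = 0 := by omega
        subst hn0
        simp [coeff_zero_eq_constantCoeff, hh])]
  simp

/-- The map φ(g,f) = (g(z²), z, f(z²)/z) is a homomorphism:
(g(z²), z, f(z²)/z) * (G(z²), z, F(z²)/z) = ((g·(G∘f))(z²), z, (F∘f)(z²)/z),
componentwise, where h is the odd square root of f(z²), a = z/h, b = fc/h. -/
theorem stmt8 (g f G F fc Fc h a b : PowerSeries K)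
    (hg : constantCoeff g ≠ 0)
    (hf0 : constantCoeff f = 0) (hf1 : coeff 1 f ≠ 0)
    (hG : constantCoeff G ≠ 0)
    (hF0 : constantCoeff F = 0) (hF1 : coeff 1 F ≠ 0)
    (hfc : X * fc = pcomp f (X ^ 2)) (hFc : X * Fc = pcomp F (X ^ 2))
    (hh : IsOddPS h) (hsq : h ^ 2 = X * fc)
    (ha : a * h = X) (hb : b * h = fc) :
    pcomp g (X ^ 2) * pcomp (pcomp G (X ^ 2)) h = pcomp (g * pcomp G f) (X ^ 2) ∧
    a * pcomp X h = X ∧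
    X * (b * pcomp Fc h) = pcomp (pcomp F f) (X ^ 2) := by
  have hX2 : constantCoeff ((X : PowerSeries K) ^ 2) = 0 := by simp
  have hh0 : constantCoeff h = 0 := by
    have := hh 0 Even.zero
    simpa [coeff_zero_eq_constantCoeff] using this
  have hX2h : pcomp ((X : PowerSeries K) ^ 2) h = h ^ 2 := by
    rw [pcomp_pow hh0, pcomp_X hh0]
  -- h ≠ 0
  have hfc1 : coeff 1 fc ≠ 0 := by
    have h2 : coeff 2 (X * fc) = coeff 1 fc := by
      simpa using coeff_X_pow_mul fc 1 1
    have h3 : coeff 2 (pcomp f ((X : PowerSeries K) ^ 2)) = coeff 1 f := by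
      rw [coeff_pcomp,
        Finset.sum_eq_single 1 (fun k hk hk1 => by
          rw [← pow_mul, coeff_X_pow, if_neg (by omega), mul_zero])
          (fun h1 => by simp at h1)]
      rw [pow_one, coeff_X_pow, if_pos rfl, mul_one]
    intro hc
    rw [← h2, hfc, h3] at hc
    exact hf1 hc
  have hfcne : fc ≠ 0 := fun hc => hfc1 (by rw [hc]; simp)
  have hhne : h ≠ 0 := by
    intro hc
    rw [hc] at hsq
    have hz : (X : PowerSeries K) * fc = 0 := by
      rw [← hsq]; ring
    rcases mul_eq_zero.mp hz with h1 | h1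
    · exact X_ne_zero h1
    · exact hfcne h1
  -- X * b = h
  have hXb : X * b = h := by
    have hcan : (X * b) * h = h * h := by
      rw [mul_assoc, hb, ← sq, hsq]
    exact mul_right_cancel₀ hhne hcan
  refine ⟨?_, ?_, ?_⟩
  · -- first component
    have h1 : pcomp (pcomp G ((X : PowerSeries K) ^ 2)) h = pcomp (pcomp G f) (X ^ 2) := by
      rw [pcomp_assoc hX2 hh0, hX2h, hsq, hfc, ← pcomp_assoc hf0 hX2]
    rw [h1, ← pcomp_mul hX2]
  · rw [pcomp_X hh0, ha]
  · have h2 : pcomp Fc h * h = pcomp (pcomp F f) ((X : PowerSeries K) ^ 2) := by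
      have hm : pcomp (X * Fc) h = pcomp X h * pcomp Fc h := pcomp_mul hh0
      rw [pcomp_X hh0] at hm
      calc pcomp Fc h * h = pcomp (X * Fc) h := by rw [hm]; ring
        _ = pcomp (pcomp F ((X : PowerSeries K) ^ 2)) h := by rw [hFc]
        _ = pcomp F (pcomp ((X : PowerSeries K) ^ 2) h) := pcomp_assoc hX2 hh0
        _ = pcomp F (pcomp f ((X : PowerSeries K) ^ 2)) := by rw [hX2h, hsq, hfc]
        _ = pcomp (pcomp F f) ((X : PowerSeries K) ^ 2) := (pcomp_assoc hf0 hX2).symm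
    calc X * (b * pcomp Fc h) = (X * b) * pcomp Fc h := by ring
      _ = pcomp Fc h * h := by rw [hXb]; ring
      _ = _ := h2
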